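/- Let u be a function on a disk D(0,r) ⊂ ℂ that belongs to the Sobolev space W^{1,δ}(D(0,r)) for some δ > 2, and is smooth on the punctured disk D(0,r)\{0}. Then liminf_{ε→0} ε · ∫_{|z|=ε} |∂u/∂z| |dz| = 0. In particular there exists a sequence ε_i → 0 with ε_i ∫_{|z|=ε_i} |∂u/∂z| |dz| → 0. -/

import Mathlib

open MeasureTheory Complex Real Filter Topology Metric

/-- The Wirtinger derivative ∂u/∂z = (∂u/∂x − i ∂u/∂y)/2 of a real-valued
function on ℂ, computed from the real Fréchet derivative. -/
noncomputable def wz (u : ℂ → ℝ) (z : ℂ) : ℂ :=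
  (((fderiv ℝ u z) 1 : ℝ) - Complex.I * ((fderiv ℝ u z) Complex.I : ℝ)) / 2

/-- The Wirtinger derivative ∂u/∂z̄ = (∂u/∂x + i ∂u/∂y)/2. -/
noncomputable def wzbar (u : ℂ → ℝ) (z : ℂ) : ℂ :=
  (((fderiv ℝ u z) 1 : ℝ) + Complex.I * ((fderiv ℝ u z) Complex.I : ℝ)) / 2

/-- The Laplacian Δu = u_xx + u_yy = 4 ∂²u/∂z∂z̄. -/
noncomputable def lap (u : ℂ → ℝ) (z : ℂ) : ℝ :=
  (fderiv ℝ (fun w => (fderiv ℝ u w) 1) z) 1 +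
  (fderiv ℝ (fun w => (fderiv ℝ u w) Complex.I) z) Complex.I

/-- The integral of `f` over the circle of radius `ε` about `0` with respect
to arclength: ∫_{|z|=ε} f |dz| = ε ∫₀^{2π} f(ε e^{iθ}) dθ. -/
noncomputable def circInt (f : ℂ → ℝ) (ε : ℝ) : ℝ :=
  ε * ∫ θ in (0:ℝ)..(2*π), f (ε * Complex.exp (θ * Complex.I))

/-- ∫_{|z-a|=ε} *du, where *du = −i(∂u/∂z)dz + i(∂u/∂z̄)dz̄, the circle
positively oriented (parametrized by a + ε e^{iθ}). -/
noncomputable def hodgeCircInt (u : ℂ → ℝ) (a : ℂ) (ε : ℝ) : ℂ :=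
  ∫ θ in (0:ℝ)..(2*π),
    (-Complex.I * wz u (a + ε * Complex.exp (θ * Complex.I)) *
        (Complex.I * ε * Complex.exp (θ * Complex.I)) +
      Complex.I * wzbar u (a + ε * Complex.exp (θ * Complex.I)) *
        (starRingEnd ℂ) (Complex.I * ε * Complex.exp (θ * Complex.I)))

lemma lintegral_comp_polarCoord_symm_real (f : ℝ × ℝ → ENNReal) :
    ∫⁻ p in polarCoord.target, ENNReal.ofReal p.1 * f (polarCoord.symm p) = ∫⁻ p, f p := by
  set B : ℝ × ℝ → ℝ × ℝ →L[ℝ] ℝ × ℝ := fun p =>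
    LinearMap.toContinuousLinearMap (Matrix.toLin (Module.Basis.finTwoProd ℝ) (Module.Basis.finTwoProd ℝ)
      !![Real.cos p.2, -p.1 * Real.sin p.2; Real.sin p.2, p.1 * Real.cos p.2]) with hB
  have A : ∀ p ∈ polarCoord.target, HasFDerivWithinAt polarCoord.symm (B p) polarCoord.target p :=
    fun p _ => (hasFDerivAt_polarCoord_symm p).hasFDerivWithinAt
  have B_det : ∀ p, (B p).det = p.1 := by
    intro p
    conv_rhs => rw [← one_mul p.1, ← Real.cos_sq_add_sin_sq p.2]
    simp only [hB, neg_mul, LinearMap.det_toContinuousLinearMap, LinearMap.det_toLin,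
      Matrix.det_fin_two_of, sub_neg_eq_add]
    ring
  have hinj : Set.InjOn polarCoord.symm polarCoord.target := polarCoord.symm.injOn
  have h := lintegral_image_eq_lintegral_abs_det_fderiv_mul volume
    polarCoord.open_target.measurableSet A hinj f
  rw [polarCoord.symm_image_target_eq_source] at h
  rw [Measure.restrict_congr_set polarCoord_source_ae_eq_univ, Measure.restrict_univ] at h
  rw [h]
  apply setLIntegral_congr_fun polarCoord.open_target.measurableSet
  intro p hp; dsimp only
  have hp1 : 0 < p.1 := by
    rw [polarCoord_target] at hp; exact hp.1
  rw [B_det, abs_of_pos hp1]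

lemma lintegral_comp_polarCoord_symm_complex (f : ℂ → ENNReal) :
    ∫⁻ p in polarCoord.target, ENNReal.ofReal p.1 * f (Complex.polarCoord.symm p) = ∫⁻ z, f z := by
  rw [← (Complex.volume_preserving_equiv_real_prod.symm).lintegral_comp_emb
    Complex.measurableEquivRealProd.symm.measurableEmbedding, ← lintegral_comp_polarCoord_symm_real]
  rfl

lemma lintegral_div_eq_top {c r₀ : ℝ} (hc : 0 < c) (hr : 0 < r₀) :
    ∫⁻ x in Set.Ioo (0:ℝ) r₀, ENNReal.ofReal (c / x) = ⊤ := by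
  by_contra h
  set M := (∫⁻ x in Set.Ioo (0:ℝ) r₀, ENNReal.ofReal (c / x)).toReal + 1 with hM
  have hM0 : 0 < M := by positivity
  set a := r₀ * Real.exp (-(M / c)) with ha
  have ha0 : 0 < a := by positivity
  have har : a < r₀ := by
    have hexp : Real.exp (-(M / c)) < 1 := by
      rw [Real.exp_lt_one_iff]
      have : 0 < M / c := by positivity
      linarith
    have := mul_lt_mul_of_pos_left hexp hr
    simpa [ha] using this
  have hIcc : IntegrableOn (fun x => c / x) (Set.Ioo a r₀) := by
    apply (ContinuousOn.integrableOn_Icc ?_).mono_set Set.Ioo_subset_Icc_self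
    exact continuousOn_const.div continuousOn_id
      (fun x hx => ne_of_gt (lt_of_lt_of_le ha0 hx.1))
  have hval : ∫ x in Set.Ioo a r₀, c / x = M := by
    rw [← MeasureTheory.integral_Ioc_eq_integral_Ioo, ← intervalIntegral.integral_of_le har.le]
    have h0 : (0:ℝ) ∉ Set.uIcc a r₀ := by
      rw [Set.uIcc_of_le har.le]
      intro hmem
      exact absurd hmem.1 (not_le.2 ha0)
    simp_rw [div_eq_mul_inv]
    rw [intervalIntegral.integral_const_mul, integral_inv h0]
    have hratio : r₀ / a = Real.exp (M / c) := by
      rw [ha, Real.exp_neg]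
      field_simp
    rw [hratio, Real.log_exp]
    field_simp
  have hle : ENNReal.ofReal M ≤ ∫⁻ x in Set.Ioo (0:ℝ) r₀, ENNReal.ofReal (c / x) := by
    rw [← hval, ofReal_integral_eq_lintegral_ofReal hIcc ?_]
    · exact lintegral_mono_set (Set.Ioo_subset_Ioo_left ha0.le)
    · filter_upwards [ae_restrict_mem measurableSet_Ioo] with x hx
      exact div_nonneg hc.le (ha0.trans hx.1).le
  have h2 := ENNReal.toReal_mono h hle
  rw [ENNReal.toReal_ofReal hM0.le] at h2
  rw [hM] at h2
  linarith

lemma norm_wz_le (u : ℂ → ℝ) (z : ℂ) : ‖wz u z‖ ≤ ‖fderiv ℝ u z‖ := by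
  have h1 : ‖(((fderiv ℝ u z) 1 : ℝ) : ℂ)‖ ≤ ‖fderiv ℝ u z‖ := by
    rw [Complex.norm_real]
    simpa using (fderiv ℝ u z).le_opNorm 1
  have h2 : ‖Complex.I * (((fderiv ℝ u z) Complex.I : ℝ) : ℂ)‖ ≤ ‖fderiv ℝ u z‖ := by
    rw [norm_mul, Complex.norm_I, one_mul, Complex.norm_real]
    simpa [Complex.norm_I] using (fderiv ℝ u z).le_opNorm Complex.I
  have htri := norm_sub_le ((((fderiv ℝ u z) 1 : ℝ)) : ℂ)
    (Complex.I * (((fderiv ℝ u z) Complex.I : ℝ) : ℂ))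
  rw [wz, norm_div]
  have h2n : ‖(2:ℂ)‖ = 2 := by norm_num
  rw [h2n]
  linarith

lemma key_aux (r : ℝ) (hr : 0 < r) (u : ℂ → ℝ)
    (hu : ContDiffOn ℝ (⊤ : ℕ∞) u (Metric.ball (0:ℂ) r \ {0}))
    (hInt : Integrable (fun z => ‖fderiv ℝ u z‖) (volume.restrict (Metric.ball (0:ℂ) r)))
    {c : ℝ} (hc : 0 < c) :
    ∃ᶠ ε in 𝓝[>] (0:ℝ), ε * circInt (fun z => ‖wz u z‖) ε < c := by
  by_contra hcon
  rw [Filter.not_frequently] at hcon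
  have hcon' : ∀ᶠ ε in 𝓝[>] (0:ℝ), c ≤ ε * circInt (fun z => ‖wz u z‖) ε := by
    filter_upwards [hcon] with x hx; linarith [not_lt.mp hx]
  rw [Filter.eventually_iff, mem_nhdsGT_iff_exists_Ioo_subset] at hcon'
  obtain ⟨b, hb, hsub⟩ := hcon'
  set r₀ : ℝ := min b r with hr₀def
  have hr₀ : 0 < r₀ := lt_min hb hr
  have hr₀r : r₀ ≤ r := min_le_right _ _
  have hlb : ∀ ε ∈ Set.Ioo (0:ℝ) r₀, c ≤ ε * circInt (fun z => ‖wz u z‖) ε := fun ε hε =>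
    hsub ⟨hε.1, lt_of_lt_of_le hε.2 (min_le_left _ _)⟩
  -- continuity of the integrand on the punctured disk
  have hopen : IsOpen (Metric.ball (0:ℂ) r \ {0}) := isOpen_ball.sdiff isClosed_singleton
  have hfc : ContinuousOn (fderiv ℝ u) (Metric.ball (0:ℂ) r \ {0}) :=
    hu.continuousOn_fderiv_of_isOpen hopen (by simp)
  have hWcont : ContinuousOn (fun z => ‖wz u z‖) (Metric.ball (0:ℂ) r \ {0}) := by
    apply ContinuousOn.norm
    unfold wz
    apply ContinuousOn.div_const
    apply ContinuousOn.sub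
    · exact Complex.continuous_ofReal.comp_continuousOn (hfc.clm_apply continuousOn_const)
    · exact continuousOn_const.mul
        (Complex.continuous_ofReal.comp_continuousOn (hfc.clm_apply continuousOn_const))
  -- the indicator function and its polar integral
  set gC : ℂ → ENNReal :=
    (Metric.ball (0:ℂ) r).indicator fun z => ENNReal.ofReal ‖fderiv ℝ u z‖ with hgC
  have hgCmeas : Measurable gC :=
    ((measurable_fderiv ℝ u).norm.ennreal_ofReal).indicator measurableSet_ball
  have hgCfin : ∫⁻ z, gC z < ⊤ := by
    rw [hgC, lintegral_indicator measurableSet_ball]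
    have h2 := hInt.2
    rw [hasFiniteIntegral_iff_norm] at h2
    simpa [norm_norm] using h2
  have hsymmcont : Continuous fun p : ℝ × ℝ => Complex.polarCoord.symm p := by
    simp only [Complex.polarCoord_symm_apply]
    fun_prop
  set F : ℝ × ℝ → ENNReal := fun p =>
    ENNReal.ofReal p.1 * gC (Complex.polarCoord.symm p) with hF
  have hFmeas : Measurable F :=
    (measurable_fst.ennreal_ofReal).mul (hgCmeas.comp hsymmcont.measurable)
  -- upper bound : the integral over the rectangle is finite
  have hup : ∫⁻ p in Set.Ioo (0:ℝ) r₀ ×ˢ Set.Ioo (-π) π, F p < ⊤ := by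
    calc ∫⁻ p in Set.Ioo (0:ℝ) r₀ ×ˢ Set.Ioo (-π) π, F p
        ≤ ∫⁻ p in polarCoord.target, F p := by
          apply lintegral_mono_set
          rw [polarCoord_target]
          exact Set.prod_mono (fun x hx => hx.1) subset_rfl
      _ < ⊤ := by
          simp only [hF]
          rw [lintegral_comp_polarCoord_symm_complex gC]
          exact hgCfin
  -- iterated integral equals the rectangle integral
  have hiter : ∫⁻ ε in Set.Ioo (0:ℝ) r₀, ∫⁻ θ in Set.Ioo (-π) π, F (ε, θ)
      = ∫⁻ p in Set.Ioo (0:ℝ) r₀ ×ˢ Set.Ioo (-π) π, F p := by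
    rw [show (volume : Measure (ℝ × ℝ)).restrict (Set.Ioo (0:ℝ) r₀ ×ˢ Set.Ioo (-π) π)
        = ((volume : Measure ℝ).restrict (Set.Ioo (0:ℝ) r₀)).prod
          ((volume : Measure ℝ).restrict (Set.Ioo (-π) π)) by
      rw [Measure.prod_restrict, ← Measure.volume_eq_prod]]
    rw [lintegral_prod _ hFmeas.aemeasurable]
  -- pointwise lower bound
  have hlow : ∀ ε ∈ Set.Ioo (0:ℝ) r₀,
      ENNReal.ofReal (c / ε) ≤ ∫⁻ θ in Set.Ioo (-π) π, F (ε, θ) := by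
    intro ε hε
    have hεr : ε < r := lt_of_lt_of_le hε.2 hr₀r
    have hmem : ∀ θ : ℝ, (↑ε * Complex.exp (↑θ * Complex.I)) ∈ Metric.ball (0:ℂ) r \ {0} := by
      intro θ
      constructor
      · rw [mem_ball_zero_iff, norm_mul, Complex.norm_exp_ofReal_mul_I, mul_one,
          Complex.norm_real, Real.norm_eq_abs, abs_of_pos hε.1]
        exact hεr
      · simp only [Set.mem_singleton_iff, mul_eq_zero, not_or]
        exact ⟨by exact_mod_cast hε.1.ne', Complex.exp_ne_zero _⟩
    have hcontθ : Continuous fun θ : ℝ => ‖wz u (↑ε * Complex.exp (↑θ * Complex.I))‖ := by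
      apply hWcont.comp_continuous _ hmem
      fun_prop
    have hper : Function.Periodic
        (fun θ : ℝ => ‖wz u (↑ε * Complex.exp (↑θ * Complex.I))‖) (2*π) := by
      intro θ
      have : (↑(θ + 2*π) : ℂ) * Complex.I = ↑θ * Complex.I + 2*π*Complex.I := by
        push_cast; ring
      simp only [this, Complex.exp_add, Complex.exp_two_pi_mul_I, mul_one]
    have hshift : ∫ θ in (0:ℝ)..(2*π), ‖wz u (↑ε * Complex.exp (↑θ * Complex.I))‖
        = ∫ θ in (-π)..π, ‖wz u (↑ε * Complex.exp (↑θ * Complex.I))‖ := by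
      have h1 := hper.intervalIntegral_add_eq 0 (-π)
      simpa [show -π + 2*π = π by ring] using h1
    have hc2 := hlb ε hε
    rw [circInt] at hc2
    have hIle : c / ε^2 ≤ ∫ θ in (-π)..π, ‖wz u (↑ε * Complex.exp (↑θ * Complex.I))‖ := by
      rw [← hshift, div_le_iff₀ (pow_pos hε.1 2)]
      nlinarith [hc2]
    have hpilt : (-π : ℝ) ≤ π := by linarith [Real.pi_pos]
    rw [intervalIntegral.integral_of_le hpilt, MeasureTheory.integral_Ioc_eq_integral_Ioo] at hIle
    have hIntθ : IntegrableOn (fun θ : ℝ => ‖wz u (↑ε * Complex.exp (↑θ * Complex.I))‖)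
        (Set.Ioo (-π) π) :=
      (hcontθ.integrableOn_Icc).mono_set Set.Ioo_subset_Icc_self
    have hofReal : ENNReal.ofReal (c / ε^2)
        ≤ ∫⁻ θ in Set.Ioo (-π) π,
            ENNReal.ofReal ‖wz u (↑ε * Complex.exp (↑θ * Complex.I))‖ := by
      calc ENNReal.ofReal (c / ε^2)
          ≤ ENNReal.ofReal (∫ θ in Set.Ioo (-π) π,
              ‖wz u (↑ε * Complex.exp (↑θ * Complex.I))‖) := ENNReal.ofReal_le_ofReal hIle
        _ = _ := ofReal_integral_eq_lintegral_ofReal hIntθ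
              (Filter.Eventually.of_forall fun θ => norm_nonneg _)
    have hFge : ∀ θ : ℝ,
        ENNReal.ofReal ε * ENNReal.ofReal ‖wz u (↑ε * Complex.exp (↑θ * Complex.I))‖
          ≤ F (ε, θ) := by
      intro θ
      have hsymm : Complex.polarCoord.symm (ε, θ) = ↑ε * Complex.exp (↑θ * Complex.I) := by
        rw [Complex.polarCoord_symm_apply, Complex.exp_mul_I]
        push_cast
        ring
      rw [hF]
      simp only [hsymm]
      apply mul_le_mul_right
      rw [hgC, Set.indicator_of_mem (hmem θ).1]
      exact ENNReal.ofReal_le_ofReal (norm_wz_le u _)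
    calc ENNReal.ofReal (c / ε)
        = ENNReal.ofReal (ε * (c / ε^2)) := by
          congr 1
          have hεne : ε ≠ 0 := hε.1.ne'
          field_simp
      _ = ENNReal.ofReal ε * ENNReal.ofReal (c / ε^2) := ENNReal.ofReal_mul hε.1.le
      _ ≤ ENNReal.ofReal ε * ∫⁻ θ in Set.Ioo (-π) π,
            ENNReal.ofReal ‖wz u (↑ε * Complex.exp (↑θ * Complex.I))‖ :=
          mul_le_mul_right hofReal _
      _ = ∫⁻ θ in Set.Ioo (-π) π,
            ENNReal.ofReal ε * ENNReal.ofReal ‖wz u (↑ε * Complex.exp (↑θ * Complex.I))‖ :=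
          (lintegral_const_mul' _ _ ENNReal.ofReal_ne_top).symm
      _ ≤ ∫⁻ θ in Set.Ioo (-π) π, F (ε, θ) := lintegral_mono fun θ => hFge θ
  -- assemble the contradiction
  have hdiv : ∫⁻ ε in Set.Ioo (0:ℝ) r₀, ENNReal.ofReal (c / ε)
      ≤ ∫⁻ ε in Set.Ioo (0:ℝ) r₀, ∫⁻ θ in Set.Ioo (-π) π, F (ε, θ) :=
    setLIntegral_mono (hFmeas.lintegral_prod_right') hlow
  rw [lintegral_div_eq_top hc hr₀, hiter] at hdiv
  exact absurd (top_le_iff.mp hdiv) hup.ne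

/-- if u ∈ W^{1,δ}(D(0,r)) with δ > 2 and u is smooth on the
punctured disk, then liminf_{ε→0} ε ∫_{|z|=ε}|∂u/∂z||dz| = 0, and there is a
sequence εᵢ → 0 along which εᵢ ∫_{|z|=εᵢ}|∂u/∂z||dz| → 0. -/
theorem stmt1 (r : ℝ) (hr : 0 < r) (u : ℂ → ℝ) (δ : ℝ) (hδ : 2 < δ)
    (hu : ContDiffOn ℝ (⊤ : ℕ∞) u (Metric.ball (0:ℂ) r \ {0}))
    (huLδ : MemLp u (ENNReal.ofReal δ) (volume.restrict (Metric.ball (0:ℂ) r)))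
    (hgradLδ : MemLp (fun z => ‖fderiv ℝ u z‖) (ENNReal.ofReal δ)
      (volume.restrict (Metric.ball (0:ℂ) r))) :
    Filter.liminf (fun ε : ℝ => ε * circInt (fun z => ‖wz u z‖) ε)
        (nhdsWithin 0 (Set.Ioi 0)) = 0 ∧
    ∃ ε : ℕ → ℝ, (∀ i, 0 < ε i) ∧ Tendsto ε atTop (nhds 0) ∧
      Tendsto (fun i => ε i * circInt (fun z => ‖wz u z‖) (ε i)) atTop (nhds 0) := by

  haveI : IsFiniteMeasure (volume.restrict (Metric.ball (0:ℂ) r)) :=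
    ⟨by rw [Measure.restrict_apply_univ]; exact measure_ball_lt_top⟩
  have hInt : Integrable (fun z => ‖fderiv ℝ u z‖) (volume.restrict (Metric.ball (0:ℂ) r)) :=
    hgradLδ.integrable (by rw [ENNReal.one_le_ofReal]; linarith)
  have key : ∀ c : ℝ, 0 < c → ∃ᶠ ε in 𝓝[>] (0:ℝ),
      ε * circInt (fun z => ‖wz u z‖) ε < c := fun c hc => key_aux r hr u hu hInt hc
  have fnn : ∀ x : ℝ, 0 < x → 0 ≤ x * circInt (fun z => ‖wz u z‖) x := by
    intro x hx
    apply mul_nonneg hx.le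
    rw [circInt]
    apply mul_nonneg hx.le
    apply intervalIntegral.integral_nonneg (by linarith [Real.pi_pos])
    exact fun θ _ => norm_nonneg _
  have hnn : ∀ᶠ ε in 𝓝[>] (0:ℝ), 0 ≤ ε * circInt (fun z => ‖wz u z‖) ε := by
    filter_upwards [self_mem_nhdsWithin] with ε hε
    exact fnn ε hε
  constructor
  · have hbdd : IsBoundedUnder (· ≥ ·) (𝓝[>] (0:ℝ))
        (fun ε => ε * circInt (fun z => ‖wz u z‖) ε) :=
      isBoundedUnder_of_eventually_ge hnn
    have hcob : IsCoboundedUnder (· ≥ ·) (𝓝[>] (0:ℝ))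
        (fun ε => ε * circInt (fun z => ‖wz u z‖) ε) :=
      IsCoboundedUnder.of_frequently_le ((key 1 one_pos).mono fun x hx => hx.le)
    refine le_antisymm ?_ (le_liminf_of_le hcob hnn)
    refine le_of_forall_pos_le_add fun c hc => ?_
    rw [zero_add]
    exact liminf_le_of_frequently_le ((key c hc).mono fun x hx => hx.le) hbdd
  · have hseq : ∀ n : ℕ, ∃ e : ℝ, 0 < e ∧ e < 1/(n+1) ∧
        e * circInt (fun z => ‖wz u z‖) e < 1/(n+1) := by
      intro n
      have h1 : (0:ℝ) < 1/(n+1) := by positivity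
      have h2 := (key _ h1).and_eventually
        (Ioo_mem_nhdsGT_of_mem (α := ℝ) ⟨le_refl 0, h1⟩)
      obtain ⟨e, hfe, he⟩ := h2.exists
      exact ⟨e, he.1, he.2, hfe⟩
    choose e he1 he2 he3 using hseq
    refine ⟨e, he1, ?_, ?_⟩
    · exact squeeze_zero (fun n => (he1 n).le) (fun n => (he2 n).le)
        tendsto_one_div_add_atTop_nhds_zero_nat
    · exact squeeze_zero (fun n => fnn _ (he1 n)) (fun n => (he3 n).le)
        tendsto_one_div_add_atTop_nhds_zero_nat
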